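/- Let Γ be a geometric distance-regular graph with diameter D ≥ 2, geometric with respect to the collection 𝒞 of Delsarte cliques, and suppose there is a function γ : {0,…,D−1} → ℕ such that for every C ∈ 𝒞, every 0 ≤ i ≤ D−1 and every vertex x with d(x,C) = i one has |Γ_i(x) ∩ C| = γ_i. Then γ_{D−1} = 1 if and only if a_i = c_i · a_1 for all 1 ≤ i ≤ D (i.e., Γ is a regular near 2D-gon). -/

import Mathlib

/-!
Two facts about the Delsarte cliques `C ∈ 𝒞`, all of the same size `n`, drive the proof.

First, their covering radius is `D - 1`. The spectral idempotent `E` of `θmin` is a polynomial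
in the adjacency matrix, so `E x y = φ (d(x, y))` for a solution `φ` of the three-term recurrence
of the intersection numbers. The Delsarte size gives `χ_Cᵀ E χ_C = 0`, hence `E χ_C = 0`; a vertex
at distance `D` from `C` would then give `φ D = 0`, and the recurrence kills `φ`, i.e. `E = 0`.

Second, the neighbours of `y` are partitioned by the cliques through `y`. For `x` at distance `i`
from `y`, such a clique with `d(x, C) = i - 1` contributes `γ (i - 1)` to `c i` and
`n - 1 - γ (i - 1)` to `a i`, and one with `d(x, C) = i` contributes `0` and `γ i - 1`.
If `γ (D - 1) = 1`, monotonicity of `γ` along geodesics gives `γ = 1`, so `a i = (n - 2) c i`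
for all `i`. Conversely, at `i = D` every clique through `y` is at distance `D - 1`, and
`a D = c D a 1` together with `a 1 ≥ n - 2` forces `γ (D - 1) = 1`.
-/

open Finset

/-- The intersection number `a_i := k - b_i - c_i`, where `k = b 0` is the valency. -/
def drgA (b c : ℕ → ℕ) (i : ℕ) : ℕ := b 0 - b i - c i

/-- `G` is a distance-regular graph with diameter `D` and intersection numbers
`b i`, `c i` (`0 ≤ i ≤ D`, with `b D = 0`, `c 0 = 0`): `G` is connected of diameter `D`,
and for any vertices `x, y` at distance `i`, `y` has exactly `c i` neighbours at distance
`i - 1` from `x` and exactly `b i` neighbours at distance `i + 1` from `x`. -/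
def IsDRG {V : Type*} [Fintype V] (G : SimpleGraph V) [DecidableRel G.Adj]
    (D : ℕ) (b c : ℕ → ℕ) : Prop :=
  G.Connected ∧
  (∀ x y : V, G.dist x y ≤ D) ∧
  (∃ x y : V, G.dist x y = D) ∧
  b D = 0 ∧ c 0 = 0 ∧
  ∀ i, i ≤ D → ∀ x y : V, G.dist x y = i →
    (Finset.univ.filter (fun z => G.Adj y z ∧ G.dist x z = i - 1)).card = c i ∧
    (Finset.univ.filter (fun z => G.Adj y z ∧ G.dist x z = i + 1)).card = b i

/-- `θ` is an eigenvalue of the adjacency matrix of `G`. -/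
def IsAdjEigenvalue {V : Type*} [Fintype V] (G : SimpleGraph V) [DecidableRel G.Adj]
    (θ : ℝ) : Prop :=
  ∃ v : V → ℝ, v ≠ 0 ∧ (G.adjMatrix ℝ).mulVec v = θ • v

/-- `θ` is the smallest eigenvalue of the adjacency matrix of `G`. -/
def IsSmallestAdjEigenvalue {V : Type*} [Fintype V] (G : SimpleGraph V) [DecidableRel G.Adj]
    (θ : ℝ) : Prop :=
  IsAdjEigenvalue G θ ∧ ∀ μ : ℝ, IsAdjEigenvalue G μ → θ ≤ μ

/-- The multiplicity of `θ` as an eigenvalue of the adjacency matrix of `G`,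
i.e. the dimension of the `θ`-eigenspace. -/
noncomputable def adjMult {V : Type*} [Fintype V] (G : SimpleGraph V) [DecidableRel G.Adj]
    (θ : ℝ) : ℕ :=
  Module.finrank ℝ (Module.End.eigenspace ((G.adjMatrix ℝ).mulVecLin) θ)

/-- `u` is the standard sequence of the eigenvalue `θ`:
`u 0 = 1`, `u 1 = θ / k`, and `c i * u (i-1) + a i * u i + b i * u (i+1) = θ * u i`
for `1 ≤ i ≤ D - 1`. -/
def IsStdSeq (D : ℕ) (b c : ℕ → ℕ) (θ : ℝ) (u : ℕ → ℝ) : Prop :=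
  u 0 = 1 ∧ u 1 = θ / (b 0 : ℝ) ∧
  ∀ i, 1 ≤ i → i ≤ D - 1 →
    (c i : ℝ) * u (i - 1) + (drgA b c i : ℝ) * u i + (b i : ℝ) * u (i + 1) = θ * u i

/-- A Delsarte clique: a clique of size `1 - k / θmin`. -/
def IsDelsarteClique {V : Type*} (G : SimpleGraph V) (k : ℕ) (θmin : ℝ)
    (C : Finset V) : Prop :=
  G.IsClique (C : Set V) ∧ (C.card : ℝ) = 1 - (k : ℝ) / θmin

/-- `G` is geometric with respect to the collection `𝒞` of Delsarte cliques:
every member of `𝒞` is a Delsarte clique and every edge lies in exactly one member of `𝒞`. -/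
def IsGeometricWith {V : Type*} (G : SimpleGraph V) (k : ℕ) (θmin : ℝ)
    (𝒞 : Set (Finset V)) : Prop :=
  (∀ C ∈ 𝒞, IsDelsarteClique G k θmin C) ∧
  ∀ x y : V, G.Adj x y → ∃! C : Finset V, C ∈ 𝒞 ∧ x ∈ C ∧ y ∈ C

/-- The distance `d(x, C) = min { d(x,c) : c ∈ C }` from a vertex to a set of vertices. -/
noncomputable def distToSet {V : Type*} (G : SimpleGraph V) (x : V) (C : Finset V) : ℕ :=
  sInf ((fun c => G.dist x c) '' (C : Set V))

/-- `C` is a completely regular code: the number of neighbours in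
`C_j = {y : d(y,C) = j}` of a vertex `x` with `d(x,C) = i` depends only on `i` and `j`,
i.e. the distance partition of `C` is equitable. -/
def IsCompletelyRegularCode {V : Type*} [Fintype V] (G : SimpleGraph V) [DecidableRel G.Adj]
    (C : Finset V) : Prop :=
  ∀ i j : ℕ, ∃ f : ℕ, ∀ x : V, distToSet G x C = i →
    (Finset.univ.filter (fun y => G.Adj x y ∧ distToSet G y C = j)).card = f

/-- `G` is non-bipartite (contains an odd cycle), i.e. not 2-colorable. -/
def NonBipartite {V : Type*} (G : SimpleGraph V) : Prop := ¬ G.Colorable 2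

/-- A set `S` of vertices is strongly closed: any vertex `z` with
`d(x,z) + d(z,y) ≤ d(x,y) + 1` for some `x, y ∈ S` belongs to `S`. -/
def IsStronglyClosed {V : Type*} (G : SimpleGraph V) (S : Set V) : Prop :=
  ∀ x ∈ S, ∀ y ∈ S, ∀ z : V, G.dist x z + G.dist z y ≤ G.dist x y + 1 → z ∈ S

/-- `G` is `m`-bounded: for every `1 ≤ i ≤ m` and all vertices `x, y` at distance `i`
there is a strongly closed set containing `x` and `y` inducing a connected subgraph
of diameter `i`. -/
def IsMBounded {V : Type*} [Fintype V] (G : SimpleGraph V) (m : ℕ) : Prop :=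
  ∀ i, 1 ≤ i → i ≤ m → ∀ x y : V, G.dist x y = i →
    ∃ S : Set V, IsStronglyClosed G S ∧ x ∈ S ∧ y ∈ S ∧
      (G.induce S).Connected ∧
      (∀ u v : S, (G.induce S).dist u v ≤ i) ∧ (∃ u v : S, (G.induce S).dist u v = i)

/-- The vector `C_j = Σ_{z ∈ Γ(x) ∩ Γ_{j-1}(y)} φ z - Σ_{w ∈ Γ_{j-1}(x) ∩ Γ(y)} φ w`. -/
noncomputable def Cvec {V : Type*} [Fintype V] (G : SimpleGraph V) [DecidableRel G.Adj]
    {N : ℕ} (φ : V → EuclideanSpace ℝ (Fin N)) (j : ℕ) (x y : V) :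
    EuclideanSpace ℝ (Fin N) :=
  (∑ z ∈ Finset.univ.filter (fun z => G.Adj x z ∧ G.dist y z = j - 1), φ z)
    - ∑ w ∈ Finset.univ.filter (fun w => G.dist x w = j - 1 ∧ G.Adj y w), φ w

open SimpleGraph Polynomial Matrix

namespace SimpleGraph

variable {V : Type*} {G : SimpleGraph V} {x y : V}

theorem Connected.exists_dist_eq_and_dist_eq_sub (hG : G.Connected) {i : ℕ}
    (hi : i ≤ G.dist x y) : ∃ z, G.dist x z = i ∧ G.dist z y = G.dist x y - i := by
  obtain ⟨p, hp⟩ := hG.exists_walk_length_eq_dist x y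
  have h₁ := G.dist_le (p.take i)
  have h₂ := G.dist_le (p.drop i)
  have h₃ := hG.dist_triangle (u := x) (v := p.getVert i) (w := y)
  simp only [Walk.take_length, Walk.drop_length] at h₁ h₂
  exact ⟨p.getVert i, by omega, by omega⟩

theorem Connected.exists_adj_dist_eq_sub_one (hG : G.Connected) (h : 1 ≤ G.dist x y) :
    ∃ w, G.Adj y w ∧ G.dist x w = G.dist x y - 1 := by
  obtain ⟨w, hxw, hwy⟩ := hG.exists_dist_eq_and_dist_eq_sub (Nat.sub_le (G.dist x y) 1)
  exact ⟨w, (dist_eq_one_iff_adj.mp (by omega)).symm, hxw⟩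

theorem sum_neighborFinset_comp_dist {M : Type*} [AddCommMonoid M] [Fintype (G.neighborSet y)]
    (hxy : 1 ≤ G.dist x y) (f : ℕ → M) :
    ∑ z ∈ G.neighborFinset y, f (G.dist x z) =
      #{z ∈ G.neighborFinset y | G.dist x z = G.dist x y - 1} • f (G.dist x y - 1) +
      #{z ∈ G.neighborFinset y | G.dist x z = G.dist x y} • f (G.dist x y) +
      #{z ∈ G.neighborFinset y | G.dist x z = G.dist x y + 1} • f (G.dist x y + 1) := by
  have hmaps : ∀ z ∈ G.neighborFinset y, G.dist x z ∈
      ({G.dist x y - 1, G.dist x y, G.dist x y + 1} : Finset ℕ) := fun z hz => by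
    rcases ((mem_neighborFinset G y z).mp hz).diff_dist_adj (u := x) with h | h | h <;> simp [h]
  rw [← sum_fiberwise_of_maps_to' hmaps, sum_insert (by simp; omega),
    sum_insert (by simp), sum_singleton, add_assoc]
  simp only [sum_const]

end SimpleGraph

section distToSet

variable {V : Type*} {G : SimpleGraph V} {C : Finset V} {x y : V}

theorem distToSet_le_dist (hy : y ∈ C) : distToSet G x C ≤ G.dist x y :=
  Nat.sInf_le ⟨y, hy, rfl⟩

theorem exists_mem_dist_eq_distToSet (hC : C.Nonempty) (x : V) :
    ∃ y ∈ C, G.dist x y = distToSet G x C :=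
  Nat.sInf_mem ((Finset.coe_nonempty.mpr hC).image _)

theorem filter_dist_eq_distToSet_nonempty (hC : C.Nonempty) (x : V) :
    {y ∈ C | G.dist x y = distToSet G x C}.Nonempty := by
  obtain ⟨y, hy, hxy⟩ := exists_mem_dist_eq_distToSet (G := G) hC x
  exact ⟨y, mem_filter.mpr ⟨hy, hxy⟩⟩

theorem dist_le_distToSet_add_one (hG : G.Connected) (hC : G.IsClique (C : Set V))
    (hy : y ∈ C) : G.dist x y ≤ distToSet G x C + 1 := by
  obtain ⟨z, hz, hxz⟩ := exists_mem_dist_eq_distToSet (G := G) ⟨y, hy⟩ x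
  have hzy : G.dist z y ≤ 1 := by
    rcases eq_or_ne z y with rfl | hne
    · simp
    · exact (dist_eq_one_iff_adj.mpr (hC hz hy hne)).le
  have := hG.dist_triangle (u := x) (v := z) (w := y)
  omega

theorem exists_distToSet_eq_and_subset (hG : G.Connected) (hC : C.Nonempty) {j : ℕ}
    (hj : j ≤ distToSet G x C) :
    ∃ u, distToSet G u C = j ∧
      {z ∈ C | G.dist u z = j} ⊆ {z ∈ C | G.dist x z = distToSet G x C} := by
  obtain ⟨z, hz, hxz⟩ := exists_mem_dist_eq_distToSet (G := G) hC x
  obtain ⟨u, hxu, huz⟩ := hG.exists_dist_eq_and_dist_eq_sub (x := x) (y := z)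
    (i := distToSet G x C - j) (by omega)
  have hu : distToSet G u C = j := by
    obtain ⟨w, hw, huw⟩ := exists_mem_dist_eq_distToSet (G := G) hC u
    have := distToSet_le_dist (G := G) (x := u) hz
    have := distToSet_le_dist (G := G) (x := x) hw
    have := hG.dist_triangle (u := x) (v := u) (w := w)
    omega
  refine ⟨u, hu, fun w hw => ?_⟩
  obtain ⟨hw, huw⟩ := mem_filter.mp hw
  have := distToSet_le_dist (G := G) (x := x) hw
  have := hG.dist_triangle (u := x) (v := u) (w := w)
  exact mem_filter.mpr ⟨hw, by omega⟩

end distToSet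

/-- `(L φ) i` for the tridiagonal intersection matrix `L` with rows `(c i, a i, b i)`. -/
noncomputable def drgL (b c : ℕ → ℕ) (φ : ℕ → ℝ) (i : ℕ) : ℝ :=
  c i * φ (i - 1) + drgA b c i * φ i + b i * φ (i + 1)

theorem eq_zero_of_drgL_eq_mul {D : ℕ} {b c : ℕ → ℕ} {θ : ℝ} {φ : ℕ → ℝ}
    (hc : ∀ i, 1 ≤ i → i ≤ D → c i ≠ 0) (hbD : b D = 0)
    (hφ : ∀ i, 1 ≤ i → i ≤ D → drgL b c φ i = θ * φ i) (hφD : φ D = 0) :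
    ∀ i ≤ D, φ i = 0 := by
  suffices key : ∀ j ≤ D, φ (D - j) = 0 ∧ (b (D - j) : ℝ) * φ (D - j + 1) = 0 by
    intro i hi
    simpa [Nat.sub_sub_self hi] using (key (D - i) (Nat.sub_le D i)).1
  intro j hj
  induction j with
  | zero => simp [hφD, hbD]
  | succ j ih =>
    obtain ⟨hφi, hbi⟩ := ih (by omega)
    have hrec := hφ (D - j) (by omega) (by omega)
    rw [drgL, hφi, hbi, mul_zero, add_zero, add_zero, mul_zero, mul_eq_zero] at hrec
    have hcj : (c (D - j) : ℝ) ≠ 0 := Nat.cast_ne_zero.mpr (hc (D - j) (by omega) (by omega))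
    have h₁ : D - (j + 1) = D - j - 1 := by omega
    have h₂ : D - (j + 1) + 1 = D - j := by omega
    rw [h₂, h₁, hφi, mul_zero]
    exact ⟨hrec.resolve_left hcj, rfl⟩

namespace IsDRG

variable {V : Type*} [Fintype V] {G : SimpleGraph V} [DecidableRel G.Adj] {D : ℕ}
  {b c : ℕ → ℕ} {x y : V} {i : ℕ}

theorem connected (h : IsDRG G D b c) : G.Connected := h.1

theorem dist_le (h : IsDRG G D b c) (x y : V) : G.dist x y ≤ D := h.2.1 x y

theorem exists_dist_eq_diam (h : IsDRG G D b c) : ∃ x y : V, G.dist x y = D := h.2.2.1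

theorem b_diam (h : IsDRG G D b c) : b D = 0 := h.2.2.2.1

theorem c_zero (h : IsDRG G D b c) : c 0 = 0 := h.2.2.2.2.1

theorem card_filter_dist_pred (h : IsDRG G D b c) (hxy : G.dist x y = i) :
    #{z ∈ G.neighborFinset y | G.dist x z = i - 1} = c i := by
  rw [neighborFinset_eq_filter, filter_filter]
  exact (h.2.2.2.2.2 i (hxy ▸ h.dist_le x y) x y hxy).1

theorem card_filter_dist_succ (h : IsDRG G D b c) (hxy : G.dist x y = i) :
    #{z ∈ G.neighborFinset y | G.dist x z = i + 1} = b i := by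
  rw [neighborFinset_eq_filter, filter_filter]
  exact (h.2.2.2.2.2 i (hxy ▸ h.dist_le x y) x y hxy).2

theorem card_neighborFinset (h : IsDRG G D b c) (y : V) : #(G.neighborFinset y) = b 0 := by
  rw [← h.card_filter_dist_succ (x := y) dist_self]
  congr 1
  ext z
  simp +contextual [dist_eq_one_iff_adj]

theorem card_filter_dist (h : IsDRG G D b c) (hxy : G.dist x y = i) (hi : 1 ≤ i) :
    #{z ∈ G.neighborFinset y | G.dist x z = i} = drgA b c i := by
  have hdeg := sum_neighborFinset_comp_dist (x := x) (y := y) (hxy ▸ hi) (fun _ => 1)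
  simp only [sum_const, smul_eq_mul, mul_one, card_neighborFinset h, hxy,
    card_filter_dist_pred h hxy, card_filter_dist_succ h hxy] at hdeg
  rw [drgA]
  omega

theorem sum_neighborFinset_comp_dist (h : IsDRG G D b c) (φ : ℕ → ℝ) (x y : V) :
    ∑ z ∈ G.neighborFinset y, φ (G.dist x z) = drgL b c φ (G.dist x y) := by
  rcases Nat.eq_zero_or_pos (G.dist x y) with h0 | hpos
  · obtain rfl : x = y := h.connected.dist_eq_zero_iff.mp h0
    have hd1 : ∀ z ∈ G.neighborFinset x, φ (G.dist x z) = φ 1 := fun z hz => by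
      rw [dist_eq_one_iff_adj.mpr ((mem_neighborFinset G x z).mp hz)]
    rw [sum_congr rfl hd1, sum_const, card_neighborFinset h, h0, drgL, drgA, h.c_zero]
    simp
  · rw [SimpleGraph.sum_neighborFinset_comp_dist hpos, card_filter_dist_pred h rfl,
      card_filter_dist h rfl hpos, card_filter_dist_succ h rfl, drgL]
    simp only [nsmul_eq_mul]

theorem adjMatrix_mul_apply_of_apply_eq (h : IsDRG G D b c) {M : Matrix V V ℝ} {φ : ℕ → ℝ}
    (hM : ∀ x y, M x y = φ (G.dist x y)) (x y : V) :
    (G.adjMatrix ℝ * M) x y = drgL b c φ (G.dist x y) := by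
  rw [adjMatrix_mul_apply, dist_comm, ← h.sum_neighborFinset_comp_dist φ y x]
  exact sum_congr rfl fun z _ => by rw [hM, dist_comm]

theorem exists_aeval_adjMatrix_apply_eq [DecidableEq V] (h : IsDRG G D b c) (p : ℝ[X]) :
    ∃ φ : ℕ → ℝ, ∀ x y, aeval (G.adjMatrix ℝ) p x y = φ (G.dist x y) := by
  induction p using Polynomial.induction_on with
  | C a =>
    refine ⟨fun i => if i = 0 then a else 0, fun x y => ?_⟩
    simp [Matrix.algebraMap_matrix_apply, h.connected.dist_eq_zero_iff]
  | add p q hp hq =>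
    obtain ⟨φ, hφ⟩ := hp
    obtain ⟨ψ, hψ⟩ := hq
    exact ⟨φ + ψ, fun x y => by simp [hφ, hψ]⟩
  | monomial n a ih =>
    obtain ⟨φ, hφ⟩ := ih
    refine ⟨drgL b c φ, fun x y => ?_⟩
    rw [pow_succ', mul_left_comm, map_mul, aeval_X]
    exact h.adjMatrix_mul_apply_of_apply_eq hφ x y

theorem exists_dist_eq (h : IsDRG G D b c) (hi : i ≤ D) : ∃ x y : V, G.dist x y = i := by
  obtain ⟨x, y, hxy⟩ := h.exists_dist_eq_diam
  obtain ⟨z, hxz, -⟩ := h.connected.exists_dist_eq_and_dist_eq_sub (hxy ▸ hi)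
  exact ⟨x, z, hxz⟩

theorem exists_adj (h : IsDRG G D b c) (hD : 1 ≤ D) : ∃ x y : V, G.Adj x y := by
  obtain ⟨x, y, hxy⟩ := h.exists_dist_eq hD
  exact ⟨x, y, dist_eq_one_iff_adj.mp hxy⟩

theorem c_ne_zero (h : IsDRG G D b c) (hi : 1 ≤ i) (hiD : i ≤ D) : c i ≠ 0 := by
  obtain ⟨x, y, hxy⟩ := h.exists_dist_eq hiD
  obtain ⟨w, hyw, hxw⟩ := h.connected.exists_adj_dist_eq_sub_one (hxy ▸ hi)
  rw [← h.card_filter_dist_pred hxy, ← pos_iff_ne_zero, card_pos]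
  exact ⟨w, mem_filter.mpr ⟨(mem_neighborFinset G y w).mpr hyw, hxw.trans (by rw [hxy])⟩⟩

theorem c_one (h : IsDRG G D b c) (hD : 1 ≤ D) : c 1 = 1 := by
  obtain ⟨x, y, hxy⟩ := h.exists_dist_eq hD
  rw [← h.card_filter_dist_pred hxy, card_eq_one]
  refine ⟨x, eq_singleton_iff_unique_mem.mpr ⟨?_, fun z hz => ?_⟩⟩
  · exact mem_filter.mpr ⟨(mem_neighborFinset G y x).mpr (dist_eq_one_iff_adj.mp hxy).symm,
      by simp⟩
  · exact (h.connected.dist_eq_zero_iff.mp (mem_filter.mp hz).2).symm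

theorem drgL_eq_mul_of_adjMatrix_mul_eq_smul (h : IsDRG G D b c) {M : Matrix V V ℝ}
    {φ : ℕ → ℝ} {θ : ℝ} (hM : ∀ x y, M x y = φ (G.dist x y))
    (hAM : G.adjMatrix ℝ * M = θ • M) (hi : i ≤ D) : drgL b c φ i = θ * φ i := by
  obtain ⟨x, y, rfl⟩ := h.exists_dist_eq hi
  rw [← h.adjMatrix_mul_apply_of_apply_eq hM, hAM, Matrix.smul_apply, hM, smul_eq_mul]

end IsDRG

namespace Matrix

variable {n : Type*} [Fintype n]

theorem IsSymm.mulVec_eq_zero_of_dotProduct_mulVec_eq_zero {E : Matrix n n ℝ} (hE : E.IsSymm)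
    (hE' : IsIdempotentElem E) {w : n → ℝ} (h : w ⬝ᵥ E *ᵥ w = 0) : E *ᵥ w = 0 := by
  have hvec : w ᵥ* E = E *ᵥ w := by rw [← vecMul_transpose, hE.eq]
  rwa [← hE', ← mulVec_mulVec, dotProduct_mulVec, hvec, dotProduct_self_eq_zero] at h

variable [DecidableEq n]

theorem IsHermitian.aeval_eq_aeval_of_eval_eigenvalues {A : Matrix n n ℝ} (hA : A.IsHermitian)
    {p q : ℝ[X]} (h : ∀ j, p.eval (hA.eigenvalues j) = q.eval (hA.eigenvalues j)) :
    aeval A p = aeval A q := by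
  rw [hA.spectral_theorem, aeval_algHom_apply, aeval_algHom_apply]
  congr 1
  change aeval (diagonalAlgHom ℝ _) p = aeval (diagonalAlgHom ℝ _) q
  rw [aeval_algHom_apply, aeval_algHom_apply, aeval_pi_apply, aeval_pi_apply]
  congr 1
  funext j
  simpa using h j

/-- The orthogonal projection onto the `θ`-eigenspace, written as a polynomial in `A` by
interpolating the indicator of `θ` on the spectrum. -/
theorem IsHermitian.exists_aeval_isIdempotentElem {A : Matrix n n ℝ} (hA : A.IsHermitian)
    {θ : ℝ} {v : n → ℝ} (hv : A *ᵥ v = θ • v) :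
    ∃ p : ℝ[X], IsIdempotentElem (aeval A p) ∧ A * aeval A p = θ • aeval A p ∧
      aeval A p *ᵥ v = v := by
  set r : ℝ → ℝ := fun t => if t = θ then 1 else 0
  set p := Lagrange.interpolate (insert θ (univ.image hA.eigenvalues)) id r
  have hp : ∀ t ∈ insert θ (univ.image hA.eigenvalues), p.eval t = r t := fun t ht =>
    Lagrange.eval_interpolate_at_node r (Set.injOn_id _) ht
  have hpμ : ∀ j, p.eval (hA.eigenvalues j) = r (hA.eigenvalues j) := fun j =>
    hp _ (mem_insert_of_mem (mem_image_of_mem _ (mem_univ j)))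
  refine ⟨p, ?_, ?_, ?_⟩
  · rw [IsIdempotentElem, ← map_mul]
    refine hA.aeval_eq_aeval_of_eval_eigenvalues fun j => ?_
    simp only [eval_mul, hpμ, r]
    split_ifs <;> simp
  · have hX : A * aeval A p = aeval A (X * p) := by rw [map_mul, aeval_X]
    have hC : θ • aeval A p = aeval A (C θ * p) := by rw [map_mul, aeval_C, Algebra.smul_def]
    rw [hX, hC]
    refine hA.aeval_eq_aeval_of_eval_eigenvalues fun j => ?_
    simp only [eval_mul, eval_X, eval_C, hpμ, r]
    split_ifs with h <;> simp [h]
  · have hvA : Matrix.toLin' A v = θ • v := by rw [toLin'_apply, hv]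
    have := Module.End.aeval_apply_of_mem_apply_eq_smul (p := p) hvA
    have hlin : toLin' (aeval A p) = aeval (toLin' A) p :=
      (aeval_algHom_apply toLinAlgEquiv' A p).symm
    rw [← toLin'_apply, hlin, this, hp θ (mem_insert_self _ _)]
    simp [r]

end Matrix

theorem IsSmallestAdjEigenvalue.lt_zero_of_adj {V : Type*} [Fintype V] [DecidableEq V]
    {G : SimpleGraph V} [DecidableRel G.Adj] {θ : ℝ} (hθ : IsSmallestAdjEigenvalue G θ) {x y : V}
    (hxy : G.Adj x y) : θ < 0 := by
  have hA := G.isHermitian_adjMatrix ℝ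
  by_contra! hθ0
  have hμ : ∀ j, 0 ≤ hA.eigenvalues j := fun j => hθ0.trans <| hθ.2 _
    ⟨_, by simpa using hA.eigenvectorBasis.orthonormal.ne_zero j, hA.mulVec_eigenvectorBasis j⟩
  have hsum : ∑ j, hA.eigenvalues j = 0 := by
    simpa using (hA.trace_eq_sum_eigenvalues).symm.trans (G.trace_adjMatrix (α := ℝ))
  have hzero : hA.eigenvalues = 0 := funext fun j =>
    (sum_eq_zero_iff_of_nonneg fun j _ => hμ j).mp hsum j (mem_univ j)
  have := congrFun₂ (hA.eigenvalues_eq_zero_iff.mp hzero) x y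
  simp [hxy] at this

theorem SimpleGraph.IsClique.sum_sum_comp_dist {V : Type*} {G : SimpleGraph V} {C : Finset V}
    (hC : G.IsClique (C : Set V)) (φ : ℕ → ℝ) :
    ∑ x ∈ C, ∑ y ∈ C, φ (G.dist x y) = #C * (φ 0 + (#C - 1) * φ 1) := by
  classical
  have hrow : ∀ x ∈ C, ∑ y ∈ C, φ (G.dist x y) = φ 0 + (#C - 1) * φ 1 := fun x hx => by
    have hadj : ∀ y ∈ C.erase x, φ (G.dist x y) = φ 1 := fun y hy => by
      obtain ⟨hyx, hy⟩ := mem_erase.mp hy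
      rw [dist_eq_one_iff_adj.mpr (hC hx hy hyx.symm)]
    rw [← add_sum_erase C _ hx, sum_congr rfl hadj, sum_const, card_erase_of_mem hx,
      nsmul_eq_mul, Nat.cast_pred (card_pos.mpr ⟨x, hx⟩), dist_self]
  rw [sum_congr rfl hrow, sum_const, nsmul_eq_mul]

namespace IsDRG

variable {V : Type*} [Fintype V] [DecidableEq V] {G : SimpleGraph V} [DecidableRel G.Adj]
  {D : ℕ} {b c : ℕ → ℕ} {θ : ℝ} {C : Finset V}

theorem sum_dist_eq_zero_of_isDelsarteClique (h : IsDRG G D b c) (hθ : θ ≠ 0)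
    (hC : IsDelsarteClique G (b 0) θ C) {M : Matrix V V ℝ} {φ : ℕ → ℝ}
    (hM : ∀ x y, M x y = φ (G.dist x y)) (hidem : IsIdempotentElem M)
    (hAM : G.adjMatrix ℝ * M = θ • M) (x : V) : ∑ y ∈ C, φ (G.dist x y) = 0 := by
  set χ : V → ℝ := fun z => if z ∈ C then 1 else 0
  have hMχ : ∀ x, (M *ᵥ χ) x = ∑ y ∈ C, φ (G.dist x y) := fun x => by
    simp [χ, mulVec, dotProduct, hM]
  have hsymm : M.IsSymm := by
    ext x y
    rw [transpose_apply, hM, hM, SimpleGraph.dist_comm]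
  have hφ01 : (b 0 : ℝ) * φ 1 = θ * φ 0 := by
    simpa [drgL, drgA, h.c_zero] using
      h.drgL_eq_mul_of_adjMatrix_mul_eq_smul hM hAM (Nat.zero_le D)
  have hquad : χ ⬝ᵥ M *ᵥ χ = 0 := by
    have hC1 : (#C - 1 : ℝ) = -(b 0 / θ) := by rw [hC.2]; ring
    simp only [dotProduct, hMχ, χ, ite_mul, one_mul, zero_mul, sum_ite_mem, univ_inter]
    rw [hC.1.sum_sum_comp_dist, hC1, neg_mul, div_mul_eq_mul_div, hφ01,
      mul_div_cancel_left₀ _ hθ]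
    ring
  simpa [hMχ] using congrFun (hsymm.mulVec_eq_zero_of_dotProduct_mulVec_eq_zero hidem hquad) x

theorem distToSet_lt_of_isDelsarteClique (h : IsDRG G D b c) (hD : 1 ≤ D)
    (hθ : IsSmallestAdjEigenvalue G θ) (hC : IsDelsarteClique G (b 0) θ C) (x : V) :
    distToSet G x C < D := by
  by_contra! hxC
  have hfar : ∀ y ∈ C, G.dist x y = D := fun y hy =>
    le_antisymm (h.dist_le x y) (hxC.trans (distToSet_le_dist hy))
  have hCne : C.Nonempty := by
    rw [nonempty_iff_ne_empty]
    rintro rfl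
    simp [distToSet] at hxC
    omega
  obtain ⟨x₀, y₀, hadj⟩ := h.exists_adj hD
  obtain ⟨v, hv0, hv⟩ := hθ.1
  obtain ⟨p, hidem, hAE, hEv⟩ := (G.isHermitian_adjMatrix ℝ).exists_aeval_isIdempotentElem hv
  obtain ⟨φ, hφ⟩ := h.exists_aeval_adjMatrix_apply_eq p
  have hφD : φ D = 0 := by
    have := h.sum_dist_eq_zero_of_isDelsarteClique (hθ.lt_zero_of_adj hadj).ne hC hφ hidem hAE x
    rw [sum_congr rfl fun y hy => by rw [hfar y hy], sum_const, nsmul_eq_mul] at this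
    exact (mul_eq_zero.mp this).resolve_left (by simpa using hCne.ne_empty)
  have hφ0 := eq_zero_of_drgL_eq_mul (fun i hi hiD => h.c_ne_zero hi hiD) h.b_diam
    (fun i _ hi => h.drgL_eq_mul_of_adjMatrix_mul_eq_smul hφ hAE hi) hφD
  have hE0 : aeval (G.adjMatrix ℝ) p = 0 := by
    ext x y
    rw [hφ, hφ0 _ (h.dist_le x y), Matrix.zero_apply]
  exact hv0 (by rw [← hEv, hE0, zero_mulVec])

end IsDRG

namespace SimpleGraph.IsClique

variable {V : Type*} {G : SimpleGraph V} {C : Finset V} {x y : V} {j : ℕ}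

theorem card_filter_dist_add_card_filter_dist_succ (hG : G.Connected)
    (hC : G.IsClique (C : Set V)) (hj : distToSet G x C = j) :
    #{z ∈ C | G.dist x z = j} + #{z ∈ C | G.dist x z = j + 1} = #C := by
  rw [← card_filter_add_card_filter_not (s := C) (fun z => G.dist x z = j)]
  congr 2
  refine filter_congr fun z hz => ?_
  have := distToSet_le_dist (G := G) (x := x) hz
  have := dist_le_distToSet_add_one (x := x) hG hC hz
  omega

variable [DecidableEq V]

theorem card_filter_erase_dist_succ_add (hG : G.Connected) (hC : G.IsClique (C : Set V))
    (hy : y ∈ C) (hxy : G.dist x y = j + 1) (hj : distToSet G x C = j) :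
    #{z ∈ C.erase y | G.dist x z = j + 1} + #{z ∈ C | G.dist x z = j} + 1 = #C := by
  have hy' : y ∈ {z ∈ C | G.dist x z = j + 1} := mem_filter.mpr ⟨hy, hxy⟩
  rw [filter_erase, card_erase_of_mem hy', ← hC.card_filter_dist_add_card_filter_dist_succ hG hj]
  have := card_pos.mpr ⟨y, hy'⟩
  omega

theorem card_filter_erase_dist_succ_eq_mul (hG : G.Connected) (hC : G.IsClique (C : Set V))
    (hnear : #{z ∈ C | G.dist x z = distToSet G x C} = 1) (hy : y ∈ C)
    (hxy : G.dist x y = j + 1) :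
    #{z ∈ C.erase y | G.dist x z = j + 1} = (#C - 2) * #{z ∈ C.erase y | G.dist x z = j} := by
  have h₁ := distToSet_le_dist (G := G) (x := x) hy
  have h₂ := dist_le_distToSet_add_one (x := x) hG hC hy
  rcases (show distToSet G x C = j ∨ distToSet G x C = j + 1 by omega) with hj | hj
  · have := hC.card_filter_erase_dist_succ_add hG hy hxy hj
    rw [hj] at hnear
    have hcount : #{z ∈ C.erase y | G.dist x z = j} = 1 := by
      rw [filter_erase, erase_eq_of_notMem (by simp [hxy]), hnear]
    rw [hcount, mul_one]
    omega
  · have hyC : {z ∈ C | G.dist x z = j + 1} = {y} := by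
      rw [hj] at hnear
      obtain ⟨w, hw⟩ := card_eq_one.mp hnear
      rw [hw, eq_comm, singleton_inj, ← mem_singleton, ← hw]
      exact mem_filter.mpr ⟨hy, hxy⟩
    have hnone : {z ∈ C.erase y | G.dist x z = j} = ∅ :=
      filter_eq_empty_iff.mpr fun z hz h => by
        have := distToSet_le_dist (G := G) (x := x) (mem_of_mem_erase hz)
        omega
    rw [filter_erase, hyC, hnone]
    simp

end SimpleGraph.IsClique

theorem card_filter_neighborFinset_eq_sum {V : Type*} [Fintype V] [DecidableEq V]
    {G : SimpleGraph V} [DecidableRel G.Adj] {𝒞 : Set (Finset V)} [DecidablePred (· ∈ 𝒞)]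
    (hclq : ∀ C ∈ 𝒞, G.IsClique (C : Set V))
    (huniq : ∀ x y : V, G.Adj x y → ∃! C : Finset V, C ∈ 𝒞 ∧ x ∈ C ∧ y ∈ C)
    (y : V) (P : V → Prop) [DecidablePred P] :
    #{z ∈ G.neighborFinset y | P z} =
      ∑ C with C ∈ 𝒞 ∧ y ∈ C, #{z ∈ C.erase y | P z} := by
  rw [← card_biUnion]
  · congr 1
    ext z
    simp only [mem_filter, mem_neighborFinset, mem_biUnion, mem_univ, true_and, mem_erase]
    constructor
    · rintro ⟨hyz, hz⟩
      obtain ⟨C, ⟨hC, hyC, hzC⟩, -⟩ := huniq y z hyz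
      exact ⟨C, ⟨hC, hyC⟩, ⟨hyz.ne.symm, hzC⟩, hz⟩
    · rintro ⟨C, ⟨hC, hyC⟩, ⟨hzy, hzC⟩, hz⟩
      exact ⟨hclq C hC hyC hzC hzy.symm, hz⟩
  · intro C₁ h₁ C₂ h₂ hne
    simp only [coe_filter, mem_univ, true_and, Set.mem_ofPred_eq] at h₁ h₂
    refine disjoint_left.mpr fun z hz₁ hz₂ => hne ?_
    simp only [mem_filter, mem_erase] at hz₁ hz₂
    obtain ⟨C, -, hC⟩ := huniq y z (hclq C₁ h₁.1 h₁.2 hz₁.1.2 hz₁.1.1.symm)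
    exact (hC C₁ ⟨h₁.1, h₁.2, hz₁.1.2⟩).trans
      (hC C₂ ⟨h₂.1, h₂.2, hz₂.1.2⟩).symm

theorem IsDRG.card_sub_two_le_drgA_one {V : Type*} [Fintype V] [DecidableEq V]
    {G : SimpleGraph V} [DecidableRel G.Adj] {D : ℕ} {b c : ℕ → ℕ} (h : IsDRG G D b c)
    {C : Finset V} (hC : G.IsClique (C : Set V)) {x y : V} (hx : x ∈ C) (hy : y ∈ C)
    (hxy : x ≠ y) : #C - 2 ≤ drgA b c 1 := by
  rw [← h.card_filter_dist (dist_eq_one_iff_adj.mpr (hC hx hy hxy)) le_rfl]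
  calc #C - 2 = #((C.erase x).erase y) := by
        rw [card_erase_of_mem (mem_erase.mpr ⟨hxy.symm, hy⟩), card_erase_of_mem hx]; omega
    _ ≤ _ := card_le_card fun z hz => by
        obtain ⟨hzy, hzx, hz⟩ := by simpa only [mem_erase] using hz
        exact mem_filter.mpr ⟨(mem_neighborFinset G y z).mpr (hC hy hz hzy.symm),
          dist_eq_one_iff_adj.mpr (hC hx hz hzx.symm)⟩

theorem IsGeometricWith.card_eq_card {V : Type*} {G : SimpleGraph V} {k : ℕ} {θ : ℝ}
    {𝒞 : Set (Finset V)} (hgeo : IsGeometricWith G k θ 𝒞) {C C' : Finset V} (hC : C ∈ 𝒞)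
    (hC' : C' ∈ 𝒞) : #C = #C' :=
  Nat.cast_injective (R := ℝ) ((hgeo.1 C hC).2.trans (hgeo.1 C' hC').2.symm)

theorem card_filter_dist_distToSet_eq_one {V : Type*} {G : SimpleGraph V} {D : ℕ}
    {𝒞 : Set (Finset V)} (hG : G.Connected) (hne : ∀ C ∈ 𝒞, C.Nonempty)
    (hcov : ∀ C ∈ 𝒞, ∀ x, distToSet G x C < D) {γ : ℕ → ℕ}
    (hγ : ∀ C ∈ 𝒞, ∀ i, i ≤ D - 1 → ∀ x : V, distToSet G x C = i →
      #{y ∈ C | G.dist x y = i} = γ i)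
    {C₀ : Finset V} (hC₀ : C₀ ∈ 𝒞) {x₀ : V} (hx₀ : distToSet G x₀ C₀ = D - 1)
    (hγD : γ (D - 1) = 1) (C : Finset V) (hC : C ∈ 𝒞) (x : V) :
    #{y ∈ C | G.dist x y = distToSet G x C} = 1 := by
  have hj : distToSet G x C ≤ D - 1 := Nat.le_sub_one_of_lt (hcov C hC x)
  obtain ⟨u, hu, hsub⟩ := exists_distToSet_eq_and_subset hG (hne C₀ hC₀) (hx₀ ▸ hj)
  have hle := card_le_card hsub
  have hpos := card_pos.mpr (filter_dist_eq_distToSet_nonempty (G := G) (hne C hC) x)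
  rw [hγ C₀ hC₀ _ hj u hu, hx₀, hγ C₀ hC₀ _ le_rfl x₀ hx₀, hγD] at hle
  rw [hγ C hC _ hj x rfl] at hpos ⊢
  omega

namespace IsDRG

variable {V : Type*} [Fintype V] [DecidableEq V] {G : SimpleGraph V} [DecidableRel G.Adj]
  {D : ℕ} {b c : ℕ → ℕ} {𝒞 : Set (Finset V)} {n : ℕ}

theorem drgA_eq_mul_of_card_filter_dist_distToSet_eq_one (h : IsDRG G D b c)
    (hclq : ∀ C ∈ 𝒞, G.IsClique (C : Set V))
    (huniq : ∀ x y : V, G.Adj x y → ∃! C : Finset V, C ∈ 𝒞 ∧ x ∈ C ∧ y ∈ C)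
    (hcard : ∀ C ∈ 𝒞, #C = n)
    (hnear : ∀ C ∈ 𝒞, ∀ x, #{y ∈ C | G.dist x y = distToSet G x C} = 1)
    {i : ℕ} (hi : 1 ≤ i) (hiD : i ≤ D) : drgA b c i = (n - 2) * c i := by
  classical
  obtain ⟨x, y, hxy⟩ := h.exists_dist_eq hiD
  obtain ⟨j, rfl⟩ : ∃ j, i = j + 1 := ⟨i - 1, by omega⟩
  rw [← h.card_filter_dist hxy hi, ← h.card_filter_dist_pred hxy, add_tsub_cancel_right,
    card_filter_neighborFinset_eq_sum hclq huniq, card_filter_neighborFinset_eq_sum hclq huniq,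
    mul_sum]
  refine sum_congr rfl fun C hC => ?_
  obtain ⟨hC, hyC⟩ := (mem_filter.mp hC).2
  rw [← hcard C hC]
  exact (hclq C hC).card_filter_erase_dist_succ_eq_mul h.connected (hnear C hC x) hyC hxy

theorem eq_one_of_drgA_eq_mul (h : IsDRG G D b c) (hclq : ∀ C ∈ 𝒞, G.IsClique (C : Set V))
    (huniq : ∀ x y : V, G.Adj x y → ∃! C : Finset V, C ∈ 𝒞 ∧ x ∈ C ∧ y ∈ C)
    (hcard : ∀ C ∈ 𝒞, #C = n) (hcov : ∀ C ∈ 𝒞, ∀ x, distToSet G x C < D) {γ : ℕ}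
    (hγ : ∀ C ∈ 𝒞, ∀ x : V, distToSet G x C = D - 1 →
      #{y ∈ C | G.dist x y = D - 1} = γ)
    {x y w : V} (hxy : G.dist x y = D) {C₀ : Finset V} (hC₀ : C₀ ∈ 𝒞) (hyC₀ : y ∈ C₀)
    (hwC₀ : w ∈ C₀) (hyw : y ≠ w) (hnp : drgA b c D = c D * drgA b c 1) : γ = 1 := by
  classical
  obtain ⟨j, rfl⟩ : ∃ j, D = j + 1 := ⟨D - 1, by have := hcov C₀ hC₀ x; omega⟩
  have hdist : ∀ C ∈ 𝒞, y ∈ C → distToSet G x C = j := fun C hC hyC => by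
    have := hcov C hC x
    have := dist_le_distToSet_add_one (x := x) h.connected (hclq C hC) hyC
    omega
  simp only [add_tsub_cancel_right] at hγ
  set T := ({C | C ∈ 𝒞 ∧ y ∈ C} : Finset (Finset V))
  have hc : c (j + 1) = #T * γ := by
    rw [← h.card_filter_dist_pred hxy, card_filter_neighborFinset_eq_sum hclq huniq,
      card_eq_sum_ones, sum_mul, one_mul]
    refine sum_congr rfl fun C hC => ?_
    obtain ⟨hC, hyC⟩ := (mem_filter.mp hC).2
    rw [add_tsub_cancel_right, filter_erase, erase_eq_of_notMem (by simp [hxy]),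
      ← hγ C hC x (hdist C hC hyC)]
  have ha : drgA b c (j + 1) + #T * (γ + 1) = #T * n := by
    rw [← h.card_filter_dist hxy (by omega), card_filter_neighborFinset_eq_sum hclq huniq,
      card_eq_sum_ones, sum_mul, sum_mul, one_mul, one_mul, ← sum_add_distrib]
    refine sum_congr rfl fun C hC => ?_
    obtain ⟨hC, hyC⟩ := (mem_filter.mp hC).2
    have := (hclq C hC).card_filter_erase_dist_succ_add h.connected hyC hxy (hdist C hC hyC)
    rw [hγ C hC x (hdist C hC hyC), hcard C hC] at this
    omega
  have hT : 0 < #T := card_pos.mpr ⟨C₀, mem_filter.mpr ⟨mem_univ _, hC₀, hyC₀⟩⟩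
  have hγpos : 0 < γ := by
    rw [← hγ C₀ hC₀ x (hdist C₀ hC₀ hyC₀), ← hdist C₀ hC₀ hyC₀]
    exact card_pos.mpr (filter_dist_eq_distToSet_nonempty ⟨y, hyC₀⟩ x)
  have ha₁ : n - 2 ≤ drgA b c 1 :=
    hcard C₀ hC₀ ▸ h.card_sub_two_le_drgA_one (hclq C₀ hC₀) hyC₀ hwC₀ hyw
  have hn : n = γ * drgA b c 1 + γ + 1 := by
    refine Nat.eq_of_mul_eq_mul_left hT ?_
    rw [← ha, hnp, hc]
    ring
  have hn₂ : 2 ≤ n := by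
    rw [← hcard C₀ hC₀]
    exact one_lt_card.mpr ⟨y, hyC₀, w, hwC₀, hyw⟩
  by_contra hγ1
  have := Nat.mul_le_mul_right (n - 2) (show 2 ≤ γ by omega)
  have := Nat.mul_le_mul_left γ ha₁
  omega

end IsDRG

/-- In a geometric distance-regular graph with diameter `D ≥ 2` in which
`|Γᵢ(x) ∩ C| = γ i` for every Delsarte clique `C ∈ 𝒞` and every vertex `x` with
`d(x,C) = i` (`0 ≤ i ≤ D - 1`), one has `γ (D-1) = 1` if and only if `a_i = c_i * a₁`
for all `1 ≤ i ≤ D` (i.e. `G` is a regular near `2D`-gon). -/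
theorem stmt_6 {V : Type*} [Fintype V] (G : SimpleGraph V) [DecidableRel G.Adj]
    (D : ℕ) (b c : ℕ → ℕ) (hDRG : IsDRG G D b c) (hD : 2 ≤ D)
    (θmin : ℝ) (hθ : IsSmallestAdjEigenvalue G θmin)
    (𝒞 : Set (Finset V)) (hgeo : IsGeometricWith G (b 0) θmin 𝒞)
    (γ : ℕ → ℕ)
    (hγ : ∀ C ∈ 𝒞, ∀ i, i ≤ D - 1 → ∀ x : V, distToSet G x C = i →
      (C.filter (fun y => G.dist x y = i)).card = γ i) :
    γ (D - 1) = 1 ↔ ∀ i, 1 ≤ i → i ≤ D → drgA b c i = c i * drgA b c 1 := by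
  classical
  have hD₁ : 1 ≤ D := by omega
  have hclq : ∀ C ∈ 𝒞, G.IsClique (C : Set V) := fun C hC => (hgeo.1 C hC).1
  have hcov : ∀ C ∈ 𝒞, ∀ x, distToSet G x C < D := fun C hC =>
    hDRG.distToSet_lt_of_isDelsarteClique hD₁ hθ (hgeo.1 C hC)
  obtain ⟨x, y, hxy⟩ := hDRG.exists_dist_eq_diam
  obtain ⟨w, hyw, -⟩ := hDRG.connected.exists_adj_dist_eq_sub_one (hxy ▸ hD₁)
  obtain ⟨C₀, ⟨hC₀, hyC₀, hwC₀⟩, -⟩ := hgeo.2 y w hyw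
  have hcard : ∀ C ∈ 𝒞, #C = #C₀ := fun C hC => hgeo.card_eq_card hC hC₀
  constructor
  · intro hγD
    have hxC₀ : distToSet G x C₀ = D - 1 := by
      have := hcov C₀ hC₀ x
      have := dist_le_distToSet_add_one (x := x) hDRG.connected (hclq C₀ hC₀) hyC₀
      omega
    have hne : ∀ C ∈ 𝒞, C.Nonempty := fun C hC =>
      card_pos.mp (hcard C hC ▸ card_pos.mpr ⟨y, hyC₀⟩)
    have hnear := card_filter_dist_distToSet_eq_one hDRG.connected hne hcov hγ hC₀ hxC₀ hγD
    intro i hi hiD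
    rw [hDRG.drgA_eq_mul_of_card_filter_dist_distToSet_eq_one hclq hgeo.2 hcard hnear hi hiD,
      hDRG.drgA_eq_mul_of_card_filter_dist_distToSet_eq_one hclq hgeo.2 hcard hnear le_rfl hD₁,
      hDRG.c_one hD₁, mul_one, mul_comm]
  · intro hnp
    exact hDRG.eq_one_of_drgA_eq_mul hclq hgeo.2 hcard hcov
      (fun C hC x hx => hγ C hC _ le_rfl x hx) hxy hC₀ hyC₀ hwC₀ hyw.ne (hnp D hD₁ le_rfl)
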